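/- K(x) = o(π(x)) as x → ∞: for every ε > 0 there exists x₀ such that for all x ≥ x₀, the number K(x) of composite integers n ≤ x with rad(φ(n)) ∣ n − 1 satisfies K(x) ≤ ε · π(x), where π(x) is the number of primes up to x. -/

import Mathlib

open Finset

/-- The radical of a natural number: the product of its distinct prime divisors. -/
def rad (n : ℕ) : ℕ := ∏ p ∈ n.primeFactors, p

/-!
If `n` is composite and `rad φ(n) ∣ n - 1`, then `n` is squarefree (a prime `p` with `p² ∣ n`
would divide both `φ(n)` and `n`), and every prime `p ∣ n` satisfies `rad (p - 1) ∣ n / p - 1`.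

Put `y = ⌊(log x)³⌋`. The numbers counted by `K(x)` all of whose prime factors are at most `y`
are squarefree and `y`-smooth, and Rankin's trick bounds those by `x ^ (1 - 1 / log y) * y³`.
Each remaining one is `P * m` with a prime `P > y` and `2 ≤ m ≡ 1 mod rad (P - 1)`, so there are
at most `x / (P * rad (P - 1))` of them for each `P`. Writing `m = b² a` with `a` squarefree
gives `m * rad m ≥ (a b)²`, whence `∑_{m ≥ y} 1 / (m rad m) ≤ 6 / √y`. Both bounds are
`o(x / log x)`, while Chebyshev gives `π(x) ≥ x / (2 log x)`.
-/

open Real Filter Topology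

lemma rad_pos (n : ℕ) : 0 < rad n :=
  prod_pos fun _ hp => (Nat.prime_of_mem_primeFactors hp).pos

lemma rad_dvd_rad {a b : ℕ} (h : a ∣ b) (hb : b ≠ 0) : rad a ∣ rad b :=
  prod_dvd_prod_of_subset _ _ _ (Nat.primeFactors_mono h hb)

lemma Squarefree.dvd_rad {a n : ℕ} (ha : Squarefree a) (h : a ∣ n) (hn : n ≠ 0) :
    a ∣ rad n := by
  simpa only [rad, Nat.prod_primeFactors_of_squarefree ha] using rad_dvd_rad h hn

lemma squarefree_of_rad_totient_dvd {n : ℕ} (hn : n ≠ 0) (h : rad n.totient ∣ n - 1) :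
    Squarefree n := by
  rw [Nat.squarefree_iff_prime_squarefree]
  intro p hp hpn
  have hp_totient : p ∣ n.totient := by
    have := Nat.totient_dvd_of_dvd hpn
    rw [← sq, Nat.totient_prime_pow_succ hp, pow_one] at this
    exact (Dvd.intro _ rfl).trans this
  have hp_sub : p ∣ n - 1 :=
    (hp.prime.squarefree.dvd_rad hp_totient (Nat.totient_pos.2 (by omega)).ne').trans h
  have hp_one : p ∣ 1 := by
    have := Nat.dvd_sub ((Dvd.intro _ rfl).trans hpn) hp_sub
    rwa [Nat.sub_sub_self (by omega)] at this
  exact hp.one_lt.ne' (Nat.dvd_one.1 hp_one)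

lemma rad_sub_one_dvd_div_sub_one {n p : ℕ} (hn : n ≠ 0) (hp : p.Prime) (hpn : p ∣ n)
    (h : rad n.totient ∣ n - 1) : rad (p - 1) ∣ n / p - 1 := by
  obtain ⟨m, rfl⟩ := hpn
  have hm : 1 ≤ m := Nat.pos_of_ne_zero (by rintro rfl; simp at hn)
  have h_sub : rad (p - 1) ∣ p * m - 1 := by
    refine (rad_dvd_rad ?_ (Nat.totient_pos.2 (by omega)).ne').trans h
    simpa [Nat.totient_prime hp] using Nat.totient_dvd_of_dvd (Dvd.intro m rfl : p ∣ p * m)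
  have h_split : p * m - 1 = (m - 1) + (p - 1) * m := by
    have := hp.one_lt
    zify [hm, hp.one_le, show 1 ≤ p * m by nlinarith]
    ring
  rw [h_split] at h_sub
  rw [Nat.mul_div_cancel_left m hp.pos]
  exact (Nat.dvd_add_left ((Nat.prod_primeFactors_dvd _).mul_right m)).1 h_sub

lemma sum_inv_sq_le_of_le (s : Finset ℕ) {A : ℝ} (hA : 0 < A) (h : ∀ a ∈ s, A ≤ a) :
    ∑ a ∈ s, ((a : ℝ) ^ 2)⁻¹ ≤ 2 / A := by
  have hceil : 1 ≤ ⌈A⌉₊ := Nat.one_le_ceil_iff.2 hA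
  have hsub : s ⊆ Ioo (⌈A⌉₊ - 1) (s.sup id + 1) := fun a ha => by
    have : ⌈A⌉₊ ≤ a := Nat.ceil_le.2 (h a ha)
    have : a ≤ s.sup id := le_sup (f := id) ha
    simp only [mem_Ioo]
    omega
  calc ∑ a ∈ s, ((a : ℝ) ^ 2)⁻¹
      ≤ ∑ a ∈ Ioo (⌈A⌉₊ - 1) (s.sup id + 1), ((a : ℝ) ^ 2)⁻¹ :=
        sum_le_sum_of_subset_of_nonneg hsub fun _ _ _ => by positivity
    _ ≤ 2 / ((⌈A⌉₊ - 1 : ℕ) + 1 : ℝ) := sum_Ioo_inv_sq_le _ _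
    _ = 2 / ⌈A⌉₊ := by rw [Nat.cast_sub hceil]; ring_nf
    _ ≤ 2 / A := div_le_div_of_nonneg_left zero_le_two hA (Nat.le_ceil A)

lemma sum_inv_mul_sq_le_two_div_max (s : Finset ℕ) {y : ℝ} (hy : 0 < y) {b : ℕ} (hb : 0 < b) :
    ∑ a ∈ s with y ≤ (a : ℕ) * (b : ℝ) ^ 2, (((a : ℝ) * b) ^ 2)⁻¹ ≤ 2 / max y (b ^ 2) := by
  have hb : (0 : ℝ) < b := Nat.cast_pos.2 hb
  have h_lower : ∀ a ∈ {a ∈ s | y ≤ (a : ℕ) * (b : ℝ) ^ 2}, max (y / b ^ 2) 1 ≤ (a : ℝ) :=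
    fun a ha => by
    have ha := (mem_filter.1 ha).2
    have : 0 < a := Nat.pos_of_ne_zero fun h => by simp [h] at ha; linarith
    exact max_le ((div_le_iff₀ (by positivity)).2 ha) (Nat.one_le_cast.2 this)
  calc ∑ a ∈ s with y ≤ (a : ℕ) * (b : ℝ) ^ 2, (((a : ℝ) * b) ^ 2)⁻¹
      = ((b : ℝ) ^ 2)⁻¹ * ∑ a ∈ s with y ≤ (a : ℕ) * (b : ℝ) ^ 2, ((a : ℝ) ^ 2)⁻¹ := by
        rw [mul_sum]; exact sum_congr rfl fun a _ => by ring
    _ ≤ ((b : ℝ) ^ 2)⁻¹ * (2 / max (y / b ^ 2) 1) := by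
        gcongr
        exact sum_inv_sq_le_of_le _ (lt_max_of_lt_right one_pos) h_lower
    _ = 2 / max y (b ^ 2) := by
        rw [show max y ((b : ℝ) ^ 2) = b ^ 2 * max (y / b ^ 2) 1 by
          rw [mul_max_of_nonneg _ _ (by positivity), mul_div_cancel₀ _ (by positivity), mul_one]]
        field_simp

lemma sum_inv_sq_mul_sq_le (M : ℕ) {y : ℝ} (hy : 0 < y) :
    ∑ q ∈ Icc 1 M ×ˢ Icc 1 M with y ≤ q.1 * q.2 ^ 2, (((q.1 : ℝ) * q.2) ^ 2)⁻¹ ≤ 6 / √y := by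
  have hsqrt : 0 < √y := sqrt_pos.2 hy
  have h_count : (#{b ∈ Icc 1 M | ((b : ℕ) : ℝ) ≤ √y} : ℝ) ≤ √y := by
    calc (#{b ∈ Icc 1 M | ((b : ℕ) : ℝ) ≤ √y} : ℝ) ≤ #(Icc 1 ⌊√y⌋₊) := by
          refine Nat.cast_le.2 (card_le_card fun b hb => ?_)
          simp only [mem_filter, mem_Icc] at hb ⊢
          exact ⟨hb.1.1, Nat.le_floor hb.2⟩
      _ ≤ √y := by simpa using Nat.floor_le hsqrt.le
  have h_tail : ∑ b ∈ Icc 1 M with ¬ ((b : ℕ) : ℝ) ≤ √y, ((b : ℝ) ^ 2)⁻¹ ≤ 2 / √y :=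
    sum_inv_sq_le_of_le _ hsqrt fun b hb => (not_le.1 (mem_filter.1 hb).2).le
  have h_bound : ∀ b ∈ Icc 1 M,
      ∑ a ∈ Icc 1 M with y ≤ (a : ℕ) * (b : ℝ) ^ 2, (((a : ℝ) * b) ^ 2)⁻¹ ≤ 2 / max y (b ^ 2) :=
    fun b hb => sum_inv_mul_sq_le_two_div_max _ hy (mem_Icc.1 hb).1
  rw [sum_filter, sum_product_right]
  simp only [← sum_filter]
  rw [← sum_filter_add_sum_filter_not _ (fun b : ℕ => (b : ℝ) ≤ √y)]
  calc ∑ b ∈ Icc 1 M with ((b : ℕ) : ℝ) ≤ √y,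
          ∑ a ∈ Icc 1 M with y ≤ (a : ℕ) * (b : ℝ) ^ 2, (((a : ℝ) * b) ^ 2)⁻¹
        + ∑ b ∈ Icc 1 M with ¬ ((b : ℕ) : ℝ) ≤ √y,
          ∑ a ∈ Icc 1 M with y ≤ (a : ℕ) * (b : ℝ) ^ 2, (((a : ℝ) * b) ^ 2)⁻¹
      ≤ ∑ b ∈ Icc 1 M with ((b : ℕ) : ℝ) ≤ √y, 2 / y
        + ∑ b ∈ Icc 1 M with ¬ ((b : ℕ) : ℝ) ≤ √y, 2 * ((b : ℝ) ^ 2)⁻¹ := by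
        gcongr with b hb b hb
        · exact (h_bound b (mem_filter.1 hb).1).trans
            (div_le_div_of_nonneg_left zero_le_two hy (le_max_left _ _))
        · refine (h_bound b (mem_filter.1 hb).1).trans ?_
          rw [← div_eq_mul_inv]
          have : (0 : ℝ) < b := Nat.cast_pos.2 (mem_Icc.1 (mem_filter.1 hb).1).1
          exact div_le_div_of_nonneg_left zero_le_two (by positivity) (le_max_right _ _)
    _ ≤ √y * (2 / y) + 2 * (2 / √y) := by
        rw [sum_const, nsmul_eq_mul, ← mul_sum]
        gcongr
    _ = 6 / √y := by
        field_simp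
        rw [sq_sqrt hy.le]
        ring

lemma sum_inv_mul_rad_le (s : Finset ℕ) {y : ℝ} (hy : 0 < y) (hs : ∀ m ∈ s, y ≤ m) :
    ∑ m ∈ s, ((m : ℝ) * rad m)⁻¹ ≤ 6 / √y := by
  choose a b hab ha using Nat.sq_mul_squarefree
  have hm0 : ∀ m ∈ s, m ≠ 0 := fun m hm h => by
    have := hs m hm; rw [h, Nat.cast_zero] at this; linarith
  have hab_pos : ∀ m ∈ s, 0 < a m ∧ 0 < b m := fun m hm => by
    have := hab m; have := hm0 m hm
    constructor <;> refine Nat.pos_of_ne_zero fun h => ?_ <;> simp_all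
  -- `m = (b m)² * a m` with `a m` squarefree, so `a m ∣ rad m` and `(a m * b m)² ≤ m * rad m`.
  have h_pointwise : ∀ m ∈ s, ((m : ℝ) * rad m)⁻¹ ≤ (((a m : ℝ) * b m) ^ 2)⁻¹ := fun m hm => by
    have ha_rad : (a m : ℝ) ≤ rad m := Nat.cast_le.2 <|
      Nat.le_of_dvd (rad_pos m) ((ha m).dvd_rad (Dvd.intro_left _ (hab m)) (hm0 m hm))
    have hm_cast : (m : ℝ) = (b m : ℝ) ^ 2 * a m := by exact_mod_cast (hab m).symm
    obtain ⟨ha_pos, hb_pos⟩ := hab_pos m hm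
    refine inv_anti₀ (by positivity) ?_
    rw [hm_cast]
    nlinarith [sq_nonneg ((b m : ℝ)), sq_nonneg ((a m : ℝ) * b m)]
  have h_inj : Set.InjOn (fun m => (a m, b m)) s := fun m _ m' _ h => by
    simp only [Prod.mk.injEq] at h
    rw [← hab m, ← hab m', h.1, h.2]
  have h_maps : s.image (fun m => (a m, b m)) ⊆
      {q ∈ Icc 1 (s.sup id) ×ˢ Icc 1 (s.sup id) | y ≤ q.1 * q.2 ^ 2} := by
    intro q hq
    obtain ⟨m, hm, rfl⟩ := mem_image.1 hq
    have hmM : m ≤ s.sup id := le_sup (f := id) hm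
    have hm_pos : 0 < m := Nat.pos_of_ne_zero (hm0 m hm)
    have ha_dvd : a m ∣ m := Dvd.intro_left _ (hab m)
    have hb_dvd : b m ∣ m := ⟨b m * a m, by rw [← mul_assoc, ← sq, hab m]⟩
    have hy_le := hs m hm
    rw [← hab m] at hy_le
    push_cast at hy_le
    simp only [mem_filter, mem_product, mem_Icc]
    exact ⟨⟨⟨(hab_pos m hm).1, (Nat.le_of_dvd hm_pos ha_dvd).trans hmM⟩,
      (hab_pos m hm).2, (Nat.le_of_dvd hm_pos hb_dvd).trans hmM⟩, by linarith⟩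
  calc ∑ m ∈ s, ((m : ℝ) * rad m)⁻¹ ≤ ∑ m ∈ s, (((a m : ℝ) * b m) ^ 2)⁻¹ :=
        sum_le_sum h_pointwise
    _ = ∑ q ∈ s.image (fun m => (a m, b m)), (((q.1 : ℝ) * q.2) ^ 2)⁻¹ :=
        (sum_image (f := fun q : ℕ × ℕ => (((q.1 : ℝ) * q.2) ^ 2)⁻¹) h_inj).symm
    _ ≤ _ := sum_le_sum_of_subset_of_nonneg h_maps fun _ _ _ => by positivity
    _ ≤ 6 / √y := sum_inv_sq_mul_sq_le _ hy

lemma card_filter_dvd_div_sub_one_le (N P d : ℕ) :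
    #{n ∈ Icc 1 N | P ∣ n ∧ P < n ∧ d ∣ n / P - 1} ≤ N / (P * d) := by
  rw [← Nat.div_div_eq_div_mul, ← Nat.Ioc_filter_dvd_card_eq_div]
  have one_lt : ∀ {n}, P ∣ n → P < n → 1 < n / P := fun hPn hlt => by
    rwa [Nat.lt_div_iff_mul_lt' hPn, mul_one]
  refine card_le_card_of_injOn (fun n => n / P - 1) (fun n hn => ?_) (fun n hn n' hn' h => ?_)
  · simp only [coe_filter, mem_Icc, mem_Ioc] at hn ⊢
    obtain ⟨⟨-, hnN⟩, hPn, hlt, hd⟩ := hn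
    have := one_lt hPn hlt
    have := Nat.div_le_div_right (c := P) hnN
    exact ⟨⟨by omega, by omega⟩, hd⟩
  · simp only [coe_filter, mem_Icc] at hn hn'
    have := one_lt hn.2.1 hn.2.2.1
    have := one_lt hn'.2.1 hn'.2.2.1
    exact (Nat.div_left_inj hn.2.1 hn'.2.1).1 (by simp only at h; omega)

lemma sum_inv_mul_rad_sub_one_le (s : Finset ℕ) {y : ℕ} (hy : 0 < y) (hs : ∀ P ∈ s, y < P) :
    ∑ P ∈ s, ((P : ℝ) * rad (P - 1))⁻¹ ≤ 6 / √y := by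
  have h_inj : Set.InjOn (fun P => P - 1) (s : Set ℕ) := fun P hP P' hP' h => by
    have := hs P hP; have := hs P' hP'
    simp only at h; omega
  calc ∑ P ∈ s, ((P : ℝ) * rad (P - 1))⁻¹ ≤ ∑ P ∈ s, (((P - 1 : ℕ) : ℝ) * rad (P - 1))⁻¹ :=
        sum_le_sum fun P hP => by
          have := hs P hP
          have := rad_pos (P - 1)
          have : (0 : ℝ) < (P - 1 : ℕ) := Nat.cast_pos.2 (by omega)
          refine inv_anti₀ (by positivity) ?_
          gcongr
          exact_mod_cast Nat.sub_le P 1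
    _ = ∑ m ∈ s.image (fun P : ℕ => P - 1), ((m : ℝ) * rad m)⁻¹ :=
        (sum_image (f := fun m : ℕ => ((m : ℝ) * rad m)⁻¹) h_inj).symm
    _ ≤ 6 / √y := sum_inv_mul_rad_le _ (Nat.cast_pos.2 hy) fun m hm => by
        obtain ⟨P, hP, rfl⟩ := mem_image.1 hm
        have := hs P hP
        exact_mod_cast (by omega : y ≤ P - 1)

lemma card_le_of_exists_prime_factor_gt {T : Finset ℕ} {N y : ℕ} (hy : 0 < y)
    (hTN : T ⊆ Icc 1 N)
    (hT : ∀ n ∈ T, ¬ n.Prime ∧ rad n.totient ∣ n - 1 ∧ ∃ p ∈ n.primeFactors, y < p) :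
    (#T : ℝ) ≤ 6 * N / √y := by
  set Ps := {P ∈ Icc 1 N | P.Prime ∧ y < P}
  have h_cover : T ⊆ Ps.biUnion
      fun P => {n ∈ Icc 1 N | P ∣ n ∧ P < n ∧ rad (P - 1) ∣ n / P - 1} := by
    intro n hn
    obtain ⟨hn_prime, hn_rad, p, hp, hyp⟩ := hT n hn
    have hn_Icc := mem_Icc.1 (hTN hn)
    have hp_prime := Nat.prime_of_mem_primeFactors hp
    have hpn := Nat.dvd_of_mem_primeFactors hp
    have hpn_le := Nat.le_of_dvd hn_Icc.1 hpn
    simp only [Ps, mem_biUnion, mem_filter, mem_Icc]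
    exact ⟨p, ⟨⟨hp_prime.one_le, hpn_le.trans hn_Icc.2⟩, hp_prime, hyp⟩, hn_Icc, hpn,
      hpn_le.lt_of_ne (by rintro rfl; exact hn_prime hp_prime),
      rad_sub_one_dvd_div_sub_one (by omega) hp_prime hpn hn_rad⟩
  calc (#T : ℝ) ≤ ∑ P ∈ Ps, ((N / (P * rad (P - 1)) : ℕ) : ℝ) := by
        exact_mod_cast (card_le_card h_cover).trans (card_biUnion_le.trans
          (sum_le_sum fun P _ => card_filter_dvd_div_sub_one_le N P _))
    _ ≤ ∑ P ∈ Ps, N * ((P : ℝ) * rad (P - 1))⁻¹ := sum_le_sum fun P _ => by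
        rw [← div_eq_mul_inv]
        exact_mod_cast Nat.cast_div_le
    _ ≤ N * (6 / √y) := by
        rw [← mul_sum]
        gcongr
        exact sum_inv_mul_rad_sub_one_le Ps hy fun P hP => (mem_filter.1 hP).2.2
    _ = 6 * N / √y := by ring

lemma sum_inv_rpow_le_prod_one_add {T Q : Finset ℕ} (σ : ℝ)
    (hT : ∀ n ∈ T, Squarefree n ∧ n.primeFactors ⊆ Q) :
    ∑ n ∈ T, ((n : ℝ) ^ σ)⁻¹ ≤ ∏ p ∈ Q, (1 + ((p : ℝ) ^ σ)⁻¹) := by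
  have h_prod : ∀ n ∈ T, ((n : ℝ) ^ σ)⁻¹ = ∏ p ∈ n.primeFactors, ((p : ℝ) ^ σ)⁻¹ :=
    fun n hn => by
    conv_lhs => rw [← Nat.prod_primeFactors_of_squarefree (hT n hn).1]
    rw [Nat.cast_prod, ← finsetProd_rpow _ _ fun p _ => Nat.cast_nonneg p, prod_inv_distrib]
  have h_inj : Set.InjOn Nat.primeFactors T := fun n hn n' hn' h => by
    rw [← Nat.prod_primeFactors_of_squarefree (hT n hn).1,
      ← Nat.prod_primeFactors_of_squarefree (hT n' hn').1, h]
  calc ∑ n ∈ T, ((n : ℝ) ^ σ)⁻¹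
      = ∑ A ∈ T.image Nat.primeFactors, ∏ p ∈ A, ((p : ℝ) ^ σ)⁻¹ := by
        rw [sum_image h_inj]; exact sum_congr rfl h_prod
    _ ≤ ∑ A ∈ Q.powerset, ∏ p ∈ A, ((p : ℝ) ^ σ)⁻¹ := by
        refine sum_le_sum_of_subset_of_nonneg (fun A hA => ?_) fun _ _ _ => by positivity
        obtain ⟨n, hn, rfl⟩ := mem_image.1 hA
        exact mem_powerset.2 (hT n hn).2
    _ = ∏ p ∈ Q, (1 + ((p : ℝ) ^ σ)⁻¹) := (prod_one_add Q).symm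

lemma card_le_rpow_mul_prod_one_add {T Q : Finset ℕ} {N : ℕ} {σ : ℝ} (hσ : 0 ≤ σ)
    (hTN : T ⊆ Icc 1 N) (hT : ∀ n ∈ T, Squarefree n ∧ n.primeFactors ⊆ Q) :
    (#T : ℝ) ≤ (N : ℝ) ^ σ * ∏ p ∈ Q, (1 + ((p : ℝ) ^ σ)⁻¹) := by
  calc (#T : ℝ) = ∑ n ∈ T, 1 := by simp
    _ ≤ ∑ n ∈ T, (N : ℝ) ^ σ * ((n : ℝ) ^ σ)⁻¹ := sum_le_sum fun n hn => by
        have hn := mem_Icc.1 (hTN hn)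
        have hn_pos : (0 : ℝ) < n := by exact_mod_cast hn.1
        rw [← div_eq_mul_inv, one_le_div (by positivity)]
        exact rpow_le_rpow hn_pos.le (by exact_mod_cast hn.2) hσ
    _ ≤ (N : ℝ) ^ σ * ∏ p ∈ Q, (1 + ((p : ℝ) ^ σ)⁻¹) := by
        rw [← mul_sum]
        exact mul_le_mul_of_nonneg_left (sum_inv_rpow_le_prod_one_add σ hT) (by positivity)

lemma sum_primesLE_inv_le_log (y : ℕ) : ∑ p ∈ Nat.primesLE y, (p : ℝ)⁻¹ ≤ log y := by
  rcases Nat.eq_zero_or_pos y with rfl | hy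
  · simp
  have h_harmonic : 1 + ∑ k ∈ Icc 2 y, (k : ℝ)⁻¹ ≤ 1 + log y := by
    have := harmonic_le_one_add_log y
    rw [harmonic_eq_sum_Icc, ← insert_Icc_add_one_left_eq_Icc hy, sum_insert (by simp)] at this
    simpa using this
  refine le_trans (sum_le_sum_of_subset_of_nonneg (fun p hp => ?_) fun _ _ _ => by positivity)
    (le_of_add_le_add_left h_harmonic)
  have := Nat.mem_primesLE.1 hp
  exact mem_Icc.2 ⟨this.2.two_le, this.1⟩

lemma one_lt_log_of_three_le {y : ℝ} (hy : 3 ≤ y) : 1 < log y := by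
  rw [lt_log_iff_exp_lt (by linarith)]
  exact exp_one_lt_d9.trans_le (by norm_num; linarith)

lemma one_sub_one_div_log_nonneg {y : ℝ} (hy : 3 ≤ y) : 0 ≤ 1 - 1 / log y := by
  have := one_lt_log_of_three_le hy
  rw [sub_nonneg, div_le_one (by linarith)]
  exact this.le

lemma card_le_of_forall_prime_factor_le {T : Finset ℕ} {N y : ℕ} (hy : 3 ≤ y)
    (hTN : T ⊆ Icc 1 N) (hT : ∀ n ∈ T, Squarefree n ∧ ∀ p ∈ n.primeFactors, p ≤ y) :
    (#T : ℝ) ≤ (N : ℝ) ^ (1 - 1 / log y) * y ^ 3 := by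
  have hy_pos : (0 : ℝ) < y := by exact_mod_cast (by omega : 0 < y)
  have hlog := one_lt_log_of_three_le (show (3 : ℝ) ≤ y by exact_mod_cast hy)
  have hσ := one_sub_one_div_log_nonneg (show (3 : ℝ) ≤ y by exact_mod_cast hy)
  -- The exponent `σ = 1 - 1 / log y` is chosen so that `p ^ (-σ) ≤ e / p` for all `p ≤ y`.
  have h_term : ∀ p ∈ Nat.primesLE y, ((p : ℝ) ^ (1 - 1 / log y))⁻¹ ≤ exp 1 * (p : ℝ)⁻¹ :=
    fun p hp => by
    have hp := Nat.mem_primesLE.1 hp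
    have hp_pos : (0 : ℝ) < p := by exact_mod_cast hp.2.pos
    rw [rpow_sub hp_pos, rpow_one, inv_div, div_eq_mul_inv, rpow_def_of_pos hp_pos]
    gcongr
    rw [mul_one_div, div_le_one (by linarith)]
    exact log_le_log hp_pos (by exact_mod_cast hp.1)
  calc (#T : ℝ) ≤ (N : ℝ) ^ (1 - 1 / log y) *
        ∏ p ∈ Nat.primesLE y, (1 + ((p : ℝ) ^ (1 - 1 / log y))⁻¹) := by
        refine card_le_rpow_mul_prod_one_add hσ hTN fun n hn => ⟨(hT n hn).1, fun p hp => ?_⟩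
        exact Nat.mem_primesLE.2 ⟨(hT n hn).2 p hp, Nat.prime_of_mem_primeFactors hp⟩
    _ ≤ (N : ℝ) ^ (1 - 1 / log y) * exp (3 * log y) := by
        gcongr
        calc ∏ p ∈ Nat.primesLE y, (1 + ((p : ℝ) ^ (1 - 1 / log y))⁻¹)
            ≤ ∏ p ∈ Nat.primesLE y, exp (((p : ℝ) ^ (1 - 1 / log y))⁻¹) :=
              prod_le_prod (fun _ _ => by positivity) fun p _ => by
                linarith [add_one_le_exp (((p : ℝ) ^ (1 - 1 / log y))⁻¹)]
          _ ≤ exp (exp 1 * ∑ p ∈ Nat.primesLE y, (p : ℝ)⁻¹) := by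
              rw [← exp_sum, mul_sum]
              exact exp_le_exp.2 (sum_le_sum h_term)
          _ ≤ exp (3 * log y) := by
              gcongr
              · exact exp_one_lt_d9.le.trans (by norm_num)
              · exact sum_primesLE_inv_le_log y
    _ = (N : ℝ) ^ (1 - 1 / log y) * y ^ 3 := by
        rw [← exp_log (pow_pos hy_pos 3), log_pow, Nat.cast_ofNat]

lemma card_rad_totient_dvd_le {x : ℝ} (hx : 0 ≤ x) {y : ℕ} (hy : 3 ≤ y) :
    (#{n ∈ Icc 1 ⌊x⌋₊ | 1 < n ∧ ¬ n.Prime ∧ rad n.totient ∣ n - 1} : ℝ) ≤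
      x ^ (1 - 1 / log y) * y ^ 3 + 6 * x / √y := by
  set S := {n ∈ Icc 1 ⌊x⌋₊ | 1 < n ∧ ¬ n.Prime ∧ rad n.totient ∣ n - 1}
  have hS : ∀ n ∈ S, n ≠ 0 ∧ ¬ n.Prime ∧ rad n.totient ∣ n - 1 := fun n hn => by
    simp only [S, mem_filter] at hn
    exact ⟨by omega, hn.2.2⟩
  have hσ := one_sub_one_div_log_nonneg (show (3 : ℝ) ≤ y by exact_mod_cast hy)
  have h_smooth := card_le_of_forall_prime_factor_le hy
    ((filter_subset (fun n => ∀ p ∈ n.primeFactors, p ≤ y) S).trans (filter_subset _ _))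
    fun n hn => by
      obtain ⟨hn, h_le⟩ := mem_filter.1 hn
      exact ⟨squarefree_of_rad_totient_dvd (hS n hn).1 (hS n hn).2.2, h_le⟩
  have h_rough := card_le_of_exists_prime_factor_gt (y := y) (by omega)
    ((filter_subset (fun n => ¬ ∀ p ∈ n.primeFactors, p ≤ y) S).trans (filter_subset _ _))
    fun n hn => by
      obtain ⟨hn, h_gt⟩ := mem_filter.1 hn
      push Not at h_gt
      exact ⟨(hS n hn).2.1, (hS n hn).2.2, h_gt⟩
  have hN := Nat.floor_le hx
  rw [← card_filter_add_card_filter_not (fun n => ∀ p ∈ n.primeFactors, p ≤ y), Nat.cast_add]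
  grw [h_smooth, h_rough, hN]

lemma eventually_div_two_mul_log_le_card_primes :
    ∀ᶠ x : ℝ in atTop, x / (2 * log x) ≤ #{p ∈ Icc 1 ⌊x⌋₊ | p.Prime} := by
  filter_upwards [eventually_ge_atTop 16,
    isLittleO_log_id_atTop.bound (show (0 : ℝ) < 1 / 10 by norm_num)] with x hx hlog_le
  rw [← Nat.primesLE_eq_filter_Icc_one, Nat.primesLE_card_eq_primeCounting]
  refine le_trans ?_ (Chebyshev.pi_ge' (by linarith))
  have hlog_pos : 0 < log x := log_pos (by linarith)
  rw [norm_of_nonneg hlog_pos.le, id, norm_of_nonneg (by linarith)] at hlog_le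
  have hlog_add : log (x + 2) ≤ log 2 + log x := by
    rw [← log_mul two_ne_zero (by linarith)]
    exact log_le_log (by linarith) (by linarith)
  have h_num : x / 2 ≤ (x - 1) * log 2 - log (x + 2) := by nlinarith [log_two_gt_d9]
  calc x / (2 * log x) = x / 2 / log x := by ring
    _ ≤ _ := div_le_div_of_nonneg_right h_num hlog_pos.le

lemma tendsto_mul_rankin_bound_zero :
    Tendsto (fun L : ℝ => L * ((⌊L ^ 3⌋₊ : ℝ) ^ 3 / exp (L / log ⌊L ^ 3⌋₊) + 6 / √⌊L ^ 3⌋₊))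
      atTop (𝓝 0) := by
  have h_lim : Tendsto (fun L : ℝ => L⁻¹ + 9 / √L) atTop (𝓝 0) := by
    simpa using tendsto_inv_atTop_zero.add
      (tendsto_const_nhds (x := (9 : ℝ)).div_atTop tendsto_sqrt_atTop)
  refine tendsto_of_tendsto_of_tendsto_of_le_of_le' tendsto_const_nhds h_lim ?_ ?_
  · filter_upwards [eventually_ge_atTop 0] with L hL using by positivity
  filter_upwards [eventually_ge_atTop 2,
    (isLittleO_pow_log_id_atTop (n := 2)).bound (show (0 : ℝ) < 1 / 33 by norm_num)]
    with L hL hlog_sq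
  set y : ℝ := (⌊L ^ 3⌋₊ : ℝ)
  have hL3 : 2 ^ 3 ≤ L ^ 3 := pow_le_pow_left₀ zero_le_two hL 3
  have hy_le : y ≤ L ^ 3 := Nat.floor_le (by positivity)
  have hy_ge : L ^ 3 / 2 ≤ y := by linarith [Nat.lt_floor_add_one (L ^ 3)]
  have hy_pos : 0 < y := by linarith
  have hlogL : 0 < log L := log_pos (by linarith)
  have hlogy : 0 < log y := log_pos (by linarith)
  rw [norm_pow, norm_of_nonneg hlogL.le, id, norm_of_nonneg (by linarith)] at hlog_sq
  have h_exp : L ^ 11 ≤ exp (L / log y) := by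
    have hlogy_le : log y ≤ 3 * log L := by simpa using log_le_log hy_pos hy_le
    calc L ^ 11 = exp (11 * log L) := by
          rw [← exp_log (pow_pos (by linarith : (0:ℝ) < L) 11), log_pow, Nat.cast_ofNat]
      _ ≤ exp (L / log y) := by
          gcongr
          rw [le_div_iff₀ hlogy]
          nlinarith [mul_le_mul_of_nonneg_left hlogy_le (by positivity : (0 : ℝ) ≤ 11 * log L)]
  have h_first : L * (y ^ 3 / exp (L / log y)) ≤ L⁻¹ := by
    rw [mul_div_assoc', div_le_iff₀ (exp_pos _)]
    calc L * y ^ 3 ≤ L * (L ^ 3) ^ 3 := by gcongr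
      _ = L⁻¹ * L ^ 11 := by field_simp
      _ ≤ L⁻¹ * exp (L / log y) := by gcongr
  have h_second : L * (6 / √y) ≤ 9 / √L := by
    have hsqrt_y := sqrt_pos.2 hy_pos
    have hsqrt_L : 0 < √L := sqrt_pos.2 (by linarith)
    rw [mul_div_assoc', div_le_div_iff₀ hsqrt_y hsqrt_L]
    refine (pow_le_pow_iff_left₀ (by positivity) (by positivity) two_ne_zero).1 ?_
    simp only [mul_pow, sq_sqrt hy_pos.le, sq_sqrt (by linarith : (0 : ℝ) ≤ L)]
    nlinarith
  rw [mul_add]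
  exact add_le_add h_first h_second

theorem K_little_o_pi :
    ∀ ε : ℝ, 0 < ε → ∃ x₀ : ℝ, ∀ x : ℝ, x₀ ≤ x →
      ((((Finset.Icc 1 ⌊x⌋₊).filter
        (fun n => 1 < n ∧ ¬ n.Prime ∧ rad n.totient ∣ n - 1)).card : ℝ))
        ≤ ε * (((Finset.Icc 1 ⌊x⌋₊).filter (fun p => p.Prime)).card : ℝ) := by
  intro ε hε
  have h_small := tendsto_log_atTop.eventually
    (tendsto_mul_rankin_bound_zero.eventually (ge_mem_nhds (half_pos hε)))
  have h_large := tendsto_log_atTop.eventually (eventually_ge_atTop (2 : ℝ))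
  obtain ⟨x₀, hx₀⟩ := eventually_atTop.1 <| ((h_small.and h_large).and
    eventually_div_two_mul_log_le_card_primes).and (eventually_gt_atTop 0)
  refine ⟨x₀, fun x hx => ?_⟩
  obtain ⟨⟨⟨h_bound, hlog⟩, h_primes⟩, hx_pos⟩ := hx₀ x hx
  have hy : 3 ≤ ⌊log x ^ 3⌋₊ := Nat.le_floor <| by
    have := pow_le_pow_left₀ zero_le_two hlog 3
    norm_num at this ⊢; linarith
  calc _ ≤ x ^ (1 - 1 / log ⌊log x ^ 3⌋₊) * ⌊log x ^ 3⌋₊ ^ 3 + 6 * x / √⌊log x ^ 3⌋₊ :=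
        card_rad_totient_dvd_le hx_pos.le hy
    _ = x / log x * (log x * ((⌊log x ^ 3⌋₊ : ℝ) ^ 3 / exp (log x / log ⌊log x ^ 3⌋₊)
          + 6 / √⌊log x ^ 3⌋₊)) := by
        rw [rpow_sub hx_pos, rpow_one, rpow_def_of_pos hx_pos]
        field_simp
    _ ≤ x / log x * (ε / 2) := by gcongr
    _ = ε * (x / (2 * log x)) := by ring
    _ ≤ _ := by gcongr
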